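/- Nudged-state derivative equals the block multiplier (induction step): let Ẽ : ℝⁿ × ℝᵖ × ℝ^m × ℝ^q → ℝ be twice continuously differentiable, let s⋆ satisfy ∇₁Ẽ(s⋆, θ, u, ω) = 0 with H := ∇₁²Ẽ(s⋆, θ, u, ω) invertible, fix δ ∈ ℝⁿ, and suppose β ↦ s_β is differentiable at 0 with s₀ = s⋆ and β δ + ∇₁Ẽ(s_β, θ, u, ω) = 0 for all β near 0. If λ ∈ ℝⁿ satisfies δ + H·λ = 0, then d/dβ s_β |_{β=0} = λ. -/

import Mathlib

open scoped RealInnerProductSpace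

open Filter Topology

noncomputable section

abbrev Euc (n : ℕ) := EuclideanSpace ℝ (Fin n)

theorem ContDiff.differentiable_gradient {E : Type*} [NormedAddCommGroup E]
    [InnerProductSpace ℝ E] [CompleteSpace E] {f : E → ℝ} (hf : ContDiff ℝ 2 f) :
    Differentiable ℝ (gradient f) :=
  (InnerProductSpace.toDual ℝ E).symm.differentiable.comp
    ((hf.fderiv_right (m := 1) (by norm_num)).differentiable one_ne_zero)

theorem add_fderiv_apply_deriv_eq_zero_of_eventually_smul_add_eq_zero
    {𝕜 E F : Type*} [NontriviallyNormedField 𝕜] [NormedAddCommGroup E] [NormedSpace 𝕜 E]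
    [NormedAddCommGroup F] [NormedSpace 𝕜 F] {G : E → F} {s : 𝕜 → E} {δ : F}
    (hG : DifferentiableAt 𝕜 G (s 0)) (hs : DifferentiableAt 𝕜 s 0)
    (hnudge : ∀ᶠ β in 𝓝 0, β • δ + G (s β) = 0) :
    δ + fderiv 𝕜 G (s 0) (deriv s 0) = 0 := by
  have hderiv : HasDerivAt (fun β => β • δ + G (s β)) (δ + fderiv 𝕜 G (s 0) (deriv s 0)) 0 := by
    simpa using ((hasDerivAt_id (0 : 𝕜)).smul_const δ).fun_add
      (hG.hasFDerivAt.comp_hasDerivAt 0 hs.hasDerivAt)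
  rw [← hderiv.deriv, EventuallyEq.deriv_eq (f := fun _ => (0 : F)) hnudge, deriv_const]

theorem stmt_12_general {n p m q : ℕ}
    (Et : Euc n → Euc p → Euc m → Euc q → ℝ)
    (hEt : ContDiff ℝ 2
      (fun t : Euc n × Euc p × Euc m × Euc q => Et t.1 t.2.1 t.2.2.1 t.2.2.2))
    (θ : Euc p) (u : Euc m) (ω : Euc q) (sstar : Euc n)
    (H Hinv : Euc n →L[ℝ] Euc n)
    (hH : H = fderiv ℝ (fun s' => gradient (fun s'' => Et s'' θ u ω) s') sstar)
    (h1 : Hinv.comp H = ContinuousLinearMap.id ℝ (Euc n))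
    (δ : Euc n) (s : ℝ → Euc n) (hs : DifferentiableAt ℝ s 0) (hs0 : s 0 = sstar)
    (ε : ℝ) (hε : 0 < ε)
    (hnudge : ∀ β ∈ Set.Ioo (-ε) ε,
      β • δ + gradient (fun s' => Et s' θ u ω) (s β) = 0)
    (lam : Euc n) (hlam : δ + H lam = 0) :
    deriv s 0 = lam := by
  have hG : Differentiable ℝ (gradient fun s' => Et s' θ u ω) :=
    (hEt.comp (contDiff_id.prodMk (contDiff_const (c := (θ, u, ω))))).differentiable_gradient
  have hHs : δ + H (deriv s 0) = 0 := by
    rw [hH, ← hs0]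
    exact add_fderiv_apply_deriv_eq_zero_of_eventually_smul_add_eq_zero (hG _) hs
      (eventually_of_mem (Ioo_mem_nhds (by linarith) hε) hnudge)
  have hH_injective : Function.Injective H :=
    Function.LeftInverse.injective (g := Hinv) fun x => congrArg (· x) h1
  exact hH_injective (add_left_cancel (hHs.trans hlam.symm))

/-- Nudged-state derivative equals the block multiplier: if
`β δ + ∇₁Ẽ(s_β, θ, u, ω) = 0` near 0, `s₀ = s⋆`, `H = ∇₁²Ẽ(s⋆,…)` invertible, and
`δ + H·λ = 0`, then `d/dβ s_β|₀ = λ`. -/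
theorem stmt_12 {n p m q : ℕ}
    (Et : Euc n → Euc p → Euc m → Euc q → ℝ)
    (hEt : ContDiff ℝ 2
      (fun t : Euc n × Euc p × Euc m × Euc q => Et t.1 t.2.1 t.2.2.1 t.2.2.2))
    (θ : Euc p) (u : Euc m) (ω : Euc q) (sstar : Euc n)
    (hcrit : gradient (fun s' => Et s' θ u ω) sstar = 0)
    (H Hinv : Euc n →L[ℝ] Euc n)
    (hH : H = fderiv ℝ (fun s' => gradient (fun s'' => Et s'' θ u ω) s') sstar)
    (h1 : Hinv.comp H = ContinuousLinearMap.id ℝ (Euc n))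
    (h2 : H.comp Hinv = ContinuousLinearMap.id ℝ (Euc n))
    (δ : Euc n) (s : ℝ → Euc n) (hs : DifferentiableAt ℝ s 0) (hs0 : s 0 = sstar)
    (ε : ℝ) (hε : 0 < ε)
    (hnudge : ∀ β ∈ Set.Ioo (-ε) ε,
      β • δ + gradient (fun s' => Et s' θ u ω) (s β) = 0)
    (lam : Euc n) (hlam : δ + H lam = 0) :
    deriv s 0 = lam :=
  stmt_12_general Et hEt θ u ω sstar H Hinv hH h1 δ s hs hs0 ε hε hnudge lam hlam
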